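/- arXiv:1504.00440 — 2 statements merged into one kernel-verified Lean document; each statement's English description precedes it below -/
import Mathlib

section
/- Heine-type identity: for the moments μ_k(t) = h_k(t), the n-th monic orthogonal polynomial with respect to the bilinear functional given by the shifted Hankel moment matrix satisfies p_{n,ℓ}(z) · Δ_{n,ℓ}(t) = (−1)^n Δ_{n,ℓ+1}(t − [z]), where [z] = (z, z^2/2, z^3/3, ...). -/
open scoped BigOperators

/-- Complete homogeneous functions `h_k(t)` defined via the generating series
`∑ h_k(t) z^k = exp(∑_{j≥1} t_j z^j)`, encoded through the equivalent recursion
`(k+1) h_{k+1} = ∑_{j=1}^{k+1} j t_j h_{k+1-j}` obtained by differentiating the series. -/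
noncomputable def hh (t : ℕ → ℂ) : ℕ → ℂ
  | 0 => 1
  | (k+1) => ((k : ℂ) + 1)⁻¹ * ∑ i ∈ Finset.range (k+1), ((i : ℂ) + 1) * t (i+1) * hh t (k - i)
decreasing_by exact Nat.lt_succ_of_le (Nat.sub_le k i)

/-- `h_k(t)` extended to integer indices, with `h_k = 0` for `k < 0`. -/
noncomputable def hZ (t : ℕ → ℂ) (m : ℤ) : ℂ := if m < 0 then 0 else hh t m.toNat

/-- Schur polynomial via the Jacobi-Trudi determinant
`s_λ(t) = det[h_{λ_j - j + k}(t)]_{j,k=1}^{ℓ}`. -/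
noncomputable def schur (ℓ : ℕ) (lam : Fin ℓ → ℕ) (t : ℕ → ℂ) : ℂ :=
  Matrix.det (Matrix.of fun j k : Fin ℓ => hZ t ((lam j : ℤ) - ((j : ℕ) + 1) + ((k : ℕ) + 1)))

/-- The `n × n` Hankel determinant `Δ_{n,ℓ}(t) = det[μ_{ℓ+j+k-2}(t)]_{j,k=1}^{n}` of the
moments `μ_k = h_k`, with `Δ_{0,ℓ} = 1`. -/
noncomputable def Del (n ℓ : ℕ) (t : ℕ → ℂ) : ℂ :=
  Matrix.det (Matrix.of fun j k : Fin n => hh t (ℓ + (j : ℕ) + (k : ℕ)))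

/-- The Miwa shift `t - [z]`, replacing `t_j` by `t_j - z^j / j`. -/
noncomputable def miwa (t : ℕ → ℂ) (z : ℂ) : ℕ → ℂ := fun j => t j - z ^ j / (j : ℂ)

/-- The monic orthogonal polynomial `p_{n,ℓ}(z)` given by the determinantal (Heine) formula:
`p_{n,ℓ}(z) = Δ_{n,ℓ}(t)⁻¹ · det` of the `(n+1) × (n+1)` matrix whose first `n` rows are
`(μ_{ℓ+j+k})_{k=0..n}`, `j = 0..n-1`, and whose last row is `(1, z, ..., z^n)`. -/
noncomputable def pOP (n ℓ : ℕ) (t : ℕ → ℂ) (z : ℂ) : ℂ :=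
  (Del n ℓ t)⁻¹ *
    Matrix.det (Matrix.of fun j k : Fin (n+1) =>
      if (j : ℕ) < n then hh t (ℓ + (j : ℕ) + (k : ℕ)) else z ^ (k : ℕ))

/-!
Write `H(X) = ∑ h_k(t) X^k = exp ϑ(X; t)`. Formally `H` is the unique series with constant term 1
solving `H' = ϑ'(X; t) H`, and the Miwa shift changes `ϑ'` by `-z / (1 - zX)`, so
`H(X; t - [z]) = (1 - zX) H(X; t)`, i.e. `h_{k+1}(t - [z]) = h_{k+1}(t) - z h_k(t)`.
Subtracting `z` times column `k - 1` from column `k` of the Heine matrix therefore turns the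
moments `h_{ℓ+j+k}(t)`, `k ≥ 1`, into `h_{ℓ+j+k}(t - [z])` and the last row `(1, z, …, z^n)` into
`(1, 0, …, 0)`; expanding along that row leaves `(-1)^n Δ_{n,ℓ+1}(t - [z])`.
-/

open PowerSeries

namespace PowerSeries

theorem mk_pow_succ_mul_one_sub_C_mul_X {R : Type*} [CommRing R] (z : R) :
    mk (fun i => z ^ (i + 1)) * (1 - C z * X) = C z := by
  ext (_ | i)
  · simp
  · rw [mul_sub, mul_one, ← mul_assoc, map_sub, coeff_succ_mul_X, mul_comm, coeff_C_mul,
      coeff_mk, coeff_mk, coeff_C, if_neg i.succ_ne_zero, pow_succ]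
    ring

theorem eq_of_derivative_eq_mul_self {K : Type*} [Field K] [CharZero K] {A F G : K⟦X⟧}
    (hF : d⁄dX K F = A * F) (hG : d⁄dX K G = A * G) (hG₀ : constantCoeff G ≠ 0)
    (h₀ : constantCoeff F = constantCoeff G) : F = G := by
  have hGG : G * G⁻¹ = 1 := PowerSeries.mul_inv_cancel G hG₀
  have hquot : F * G⁻¹ = 1 := by
    refine derivative.ext ?_ ?_
    · rw [Derivation.leibniz, derivative_inv', hF, hG, derivative_one, smul_eq_mul, smul_eq_mul]
      linear_combination (-(A * F * G⁻¹)) * hGG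
    · simp [constantCoeff_inv, h₀, hG₀]
  calc F = F * G⁻¹ * G := by rw [mul_assoc, PowerSeries.inv_mul_cancel G hG₀, mul_one]
    _ = G := by rw [hquot, one_mul]

end PowerSeries

/-- `∑ h_k(t) X^k`, the formal series `exp ϑ(X; t)`. -/
noncomputable def hSeries (t : ℕ → ℂ) : ℂ⟦X⟧ := mk (hh t)

/-- `ϑ'(X; t)`, the derivative of `ϑ(X; t) = ∑ t_j X^j`. -/
noncomputable def potentialDeriv (t : ℕ → ℂ) : ℂ⟦X⟧ := mk fun i => ((i : ℂ) + 1) * t (i + 1)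

theorem hh_succ (t : ℕ → ℂ) (k : ℕ) :
    hh t (k + 1) * ((k : ℂ) + 1) =
      ∑ i ∈ Finset.range (k + 1), ((i : ℂ) + 1) * t (i + 1) * hh t (k - i) := by
  rw [hh, mul_comm, ← mul_assoc, mul_inv_cancel₀ (Nat.cast_add_one_ne_zero k), one_mul]

theorem derivative_hSeries (t : ℕ → ℂ) :
    d⁄dX ℂ (hSeries t) = potentialDeriv t * hSeries t := by
  ext k
  rw [coeff_derivative, coeff_mul, Finset.Nat.sum_antidiagonal_eq_sum_range_succ_mk]
  simp only [hSeries, potentialDeriv, coeff_mk]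
  exact hh_succ t k

theorem potentialDeriv_miwa (t : ℕ → ℂ) (z : ℂ) :
    potentialDeriv (miwa t z) = potentialDeriv t - mk fun i => z ^ (i + 1) := by
  ext i
  simp only [potentialDeriv, miwa, coeff_mk, map_sub]
  push_cast
  field_simp

theorem hSeries_miwa (t : ℕ → ℂ) (z : ℂ) :
    hSeries (miwa t z) = (1 - C z * X) * hSeries t := by
  refine eq_of_derivative_eq_mul_self (derivative_hSeries _) ?_ ?_ ?_
  · simp only [potentialDeriv_miwa, Derivation.leibniz, derivative_hSeries, map_sub,
      Derivation.map_one_eq_zero, derivative_X, derivative_C, smul_eq_mul]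
    linear_combination (hSeries t) * mk_pow_succ_mul_one_sub_C_mul_X z
  all_goals simp [hSeries, hh]

theorem hh_miwa_succ (t : ℕ → ℂ) (z : ℂ) (k : ℕ) :
    hh (miwa t z) (k + 1) = hh t (k + 1) - z * hh t k := by
  have := congrArg (coeff (k + 1)) (hSeries_miwa t z)
  rw [sub_mul, one_mul, mul_assoc, map_sub, coeff_C_mul, coeff_succ_X_mul] at this
  simpa [hSeries] using this

theorem Matrix.det_eq_neg_one_pow_mul_det_submatrix_of_last_row_eq_single {R : Type*}
    [CommRing R] {n : ℕ} (M : Matrix (Fin (n + 1)) (Fin (n + 1)) R)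
    (hM : M (Fin.last n) = Pi.single 0 1) :
    M.det = (-1) ^ n * (M.submatrix Fin.castSucc Fin.succ).det := by
  rw [Matrix.det_succ_row M (Fin.last n), Finset.sum_eq_single 0]
  · simp [hM]
  · intro k _ hk
    simp [hM, hk]
  · simp

noncomputable def heineMatrix (n ℓ : ℕ) (t : ℕ → ℂ) (z : ℂ) : Matrix (Fin (n + 1)) (Fin (n + 1)) ℂ :=
  Matrix.of fun j k => if (j : ℕ) < n then hh t (ℓ + j + k) else z ^ (k : ℕ)

theorem det_heineMatrix (n ℓ : ℕ) (t : ℕ → ℂ) (z : ℂ) :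
    (heineMatrix n ℓ t z).det = (-1) ^ n * Del n (ℓ + 1) (miwa t z) := by
  set M : Matrix (Fin (n + 1)) (Fin (n + 1)) ℂ := Matrix.of fun j k =>
    if (j : ℕ) < n then (if k = 0 then hh t (ℓ + j) else hh (miwa t z) (ℓ + j + k))
    else (Pi.single 0 1 : Fin (n + 1) → ℂ) k with hM
  have hcol : (heineMatrix n ℓ t z).det = M.det := by
    refine Matrix.det_eq_of_forall_col_eq_smul_add_pred (fun _ => z) (fun j => ?_) (fun j k => ?_)
    · by_cases hj : (j : ℕ) < n <;> simp [heineMatrix, hM, hj]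
    · by_cases hj : (j : ℕ) < n
      · simp [heineMatrix, hM, hj, Fin.succ_ne_zero, ← add_assoc, hh_miwa_succ]
      · simp [heineMatrix, hM, hj, Fin.succ_ne_zero, pow_succ, mul_comm]
  have hlast : M (Fin.last n) = Pi.single 0 1 := by
    ext k; simp [hM]
  rw [hcol, M.det_eq_neg_one_pow_mul_det_submatrix_of_last_row_eq_single hlast, Del]
  congr 2
  ext j k
  simp [hM, Fin.succ_ne_zero, add_assoc, add_comm 1]

/-- Heine-type identity
`p_{n,ℓ}(z) · Δ_{n,ℓ}(t) = (-1)^n Δ_{n,ℓ+1}(t - [z])`. -/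
theorem stmt_11 (n ℓ : ℕ) (t : ℕ → ℂ) (z : ℂ) (hΔ : Del n ℓ t ≠ 0) :
    pOP n ℓ t z * Del n ℓ t = (-1) ^ n * Del n (ℓ+1) (miwa t z) := by
  have hpOP : pOP n ℓ t z = (Del n ℓ t)⁻¹ * (heineMatrix n ℓ t z).det := rfl
  rw [hpOP, mul_right_comm, inv_mul_cancel₀ hΔ, one_mul, det_heineMatrix]
end

section
/- Let P(z; a) = z^{2N} − (1/(2a)) T_{N−1,−1/2}(z²/a²), where T_{m,α} is the degree-m Maclaurin polynomial of (1+ζ)^α. Then P(± i a; a) = 0 if and only if a^{2N+1} = (−1)^N N 2^{−2N} binomial(2N, N). -/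
open scoped BigOperators

/-- Generalized binomial coefficient `binom(α, k) = α(α-1)⋯(α-k+1)/k!`. -/
noncomputable def genBinom (α : ℂ) (k : ℕ) : ℂ :=
  (∏ i ∈ Finset.range k, (α - (i : ℂ))) / (Nat.factorial k : ℂ)

/-- `T_{m,α}(ζ) = ∑_{k=0}^m binom(α,k) ζ^k`, the degree-`m` Maclaurin polynomial
of `(1+ζ)^α`. -/
noncomputable def TPoly (m : ℕ) (α : ℂ) (ζ : ℂ) : ℂ :=
  ∑ k ∈ Finset.range (m+1), genBinom α k * ζ ^ k

/-- `P(z; a) = z^{2N} - (1/(2a)) T_{N-1,-1/2}(z²/a²)`. -/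
noncomputable def PP (N : ℕ) (a z : ℂ) : ℂ :=
  z ^ (2*N) - 1 / (2*a) * TPoly (N-1) (-1/2) (z^2 / a^2)

/-! At `z = ±ia` the argument `z²/a²` of the Maclaurin polynomial is `-1`, and
`∑_{k<N} binom(-1/2, k) (-1)^k = ∑_{k<N} C(2k,k)/4^k = 2N C(2N,N)/4^N`; so
`P(±ia; a) = (-1)^N a^{2N} - N C(2N,N)/(4^N a)`, whose vanishing is the stated equation. -/

open Finset Nat

lemma cast_succ_mul_centralBinom_succ {K : Type*} [Semiring K] (n : ℕ) :
    ((n : K) + 1) * centralBinom (n + 1) = 2 * (2 * n + 1) * centralBinom n := by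
  simpa using congrArg (Nat.cast : ℕ → K) (succ_mul_centralBinom_succ n)

lemma genBinom_succ (α : ℂ) (k : ℕ) :
    genBinom α (k + 1) = genBinom α k * (α - k) / (k + 1) := by
  simp only [genBinom, prod_range_succ, factorial_succ, cast_mul, cast_add, cast_one]
  field_simp

lemma genBinom_neg_half (k : ℕ) : genBinom (-1/2) k = (-1/4) ^ k * centralBinom k := by
  induction k with
  | zero => simp [genBinom]
  | succ k ih =>
    have hk : (k : ℂ) + 1 ≠ 0 := by exact_mod_cast k.succ_ne_zero
    rw [genBinom_succ, ih, div_eq_iff hk]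
    linear_combination -(-1/4 : ℂ) ^ (k + 1) * cast_succ_mul_centralBinom_succ (K := ℂ) k

lemma sum_range_centralBinom_div_four_pow {K : Type*} [Field K] [CharZero K] (N : ℕ) :
    ∑ k ∈ range N, (centralBinom k : K) / 4 ^ k = 2 * N * centralBinom N / 4 ^ N := by
  induction N with
  | zero => simp
  | succ n ih =>
    rw [sum_range_succ, ih, pow_succ]
    field_simp
    push_cast
    linear_combination (-2 : K) * cast_succ_mul_centralBinom_succ (K := K) n

lemma TPoly_neg_half_neg_one {N : ℕ} (hN : 1 ≤ N) :
    TPoly (N - 1) (-1/2) (-1) = 2 * N * centralBinom N / 4 ^ N := by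
  have hterm (k : ℕ) : genBinom (-1/2) k * (-1) ^ k = (centralBinom k : ℂ) / 4 ^ k := by
    rw [genBinom_neg_half, mul_right_comm, ← mul_pow,
      show (-1/4 : ℂ) * -1 = 4⁻¹ by norm_num, inv_pow, inv_mul_eq_div]
  rw [TPoly, Nat.sub_add_cancel hN]
  simp only [hterm]
  exact sum_range_centralBinom_div_four_pow N

lemma PP_eq_zero_iff_of_sq_eq_neg_sq {N : ℕ} (hN : 1 ≤ N) {a z : ℂ} (ha : a ≠ 0)
    (hz : z ^ 2 = -a ^ 2) :
    PP N a z = 0 ↔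
      a ^ (2*N+1) = (-1) ^ N * (N : ℂ) / 2 ^ (2*N) * (Nat.choose (2*N) N : ℂ) := by
  have harg : z ^ 2 / a ^ 2 = -1 := by rw [hz, neg_div, div_self (pow_ne_zero 2 ha)]
  have hpow : z ^ (2*N) = (-1) ^ N * a ^ (2*N) := by rw [pow_mul, hz, neg_pow, ← pow_mul]
  have hsign : ((-1 : ℂ) ^ N) ^ 2 = 1 := by rw [← pow_mul, mul_comm, pow_mul]; norm_num
  have h4 : (4 : ℂ) ^ N ≠ 0 := pow_ne_zero _ (by norm_num)
  have h2N : (2 : ℂ) ^ (2*N) = 4 ^ N := by rw [pow_mul]; norm_num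
  rw [PP, harg, hpow, TPoly_neg_half_neg_one hN, h2N, centralBinom_eq_two_mul_choose]
  set c : ℂ := (((2*N).choose N : ℕ) : ℂ)
  have hPP : (-1) ^ N * a ^ (2*N) - 1 / (2*a) * (2 * N * c / 4 ^ N)
      = ((-1) ^ N * (a ^ (2*N) * a * 4 ^ N) - N * c) / (a * 4 ^ N) := by
    field_simp
  rw [hPP, div_eq_zero_iff, or_iff_left (mul_ne_zero ha h4), sub_eq_zero, pow_succ,
    div_mul_eq_mul_div, eq_div_iff h4]
  constructor <;> intro h
  · linear_combination (-1) ^ N * h - a ^ (2*N) * a * 4 ^ N * hsign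
  · linear_combination (-1) ^ N * h + N * c * hsign

/-- `P(± i a; a) = 0` iff `a^{2N+1} = (-1)^N N 2^{-2N} C(2N,N)`. -/
theorem stmt_13 (N : ℕ) (hN : 1 ≤ N) (a : ℂ) (ha : a ≠ 0) :
    (PP N a (Complex.I * a) = 0 ↔
        a ^ (2*N+1) = (-1) ^ N * (N : ℂ) / 2 ^ (2*N) * (Nat.choose (2*N) N : ℂ)) ∧
      (PP N a (-(Complex.I * a)) = 0 ↔
        a ^ (2*N+1) = (-1) ^ N * (N : ℂ) / 2 ^ (2*N) * (Nat.choose (2*N) N : ℂ)) := by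
  have hsq : (Complex.I * a) ^ 2 = -a ^ 2 := by rw [mul_pow, Complex.I_sq, neg_one_mul]
  exact ⟨PP_eq_zero_iff_of_sq_eq_neg_sq hN ha hsq,
    PP_eq_zero_iff_of_sq_eq_neg_sq hN ha (by rw [neg_sq, hsq])⟩
end
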